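/- Assume p = 2 (the case d = gl.dim Λ(n,l), i.e. Λ(n,l) is d-representation-finite). Then the number of well-configured C-data equals 2n + l − 1. (By Theorem A this is exactly the number of summand-maximal τ_d-rigid pairs of Λ(n,l).) -/

import Mathlib

/-!
For `p = 2` only the diagonal `X 2` can be nonempty, `Ξ(2, 2) = [1, n]` and every `Θ`-interval
is empty. Hence a well-configured datum is determined by the triple `(X 2, R, B)`, and the
conditions on it say that either `T = ∅`, or `X 2` is an interval forming a full admissible
configuration of type (I), (II) or (III). Solving these conditions puts the triple in one of four
families: `(∅, [1, x], [x + 1, n])` for `0 ≤ x ≤ n`; `([1, b], ∅, [1, n - b])` for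
`1 ≤ b ≤ l - 2` (type (I)); `([a, l - 1], [l - a + 1, n], ∅)` for `2 ≤ a ≤ l - 1` (type (II));
and `([1, l - 1], [x + l, n], [1, x])` for `0 ≤ x ≤ n - l + 1` (type (III): `x = 0` is the rigid
case, `x = n - l + 1` the support case, and the others are support to rigid at `x`). These have
`n + 1`, `l - 2`, `l - 2` and `n - l + 2` members, in total `2n + l - 1`.
-/

open scoped Classical

/-- The numerical setup under which the truncated linear Nakayama algebra `Λ(n,l)`
admits a `d`-cluster tilting subcategory, together with the integers `s i`
(defined by `2 * s i = …`). -/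
structure NakSetup where
  n : ℤ
  l : ℤ
  d : ℤ
  p : ℤ
  s : ℤ → ℤ
  hl : 2 ≤ l
  hd : 2 ≤ d
  hp : 1 ≤ p
  hn : 2 * n = (p - 1) * ((d - 1) * l + 2) + l
  hcase : l = 2 ∨ (2 < l ∧ Even d ∧ Even p)
  hs_odd : ∀ i, 1 ≤ i → i ≤ p → Odd i → 2 * s i = (i - 1) * (d - 1) * l + 2 * i
  hs_even : ∀ i, 1 ≤ i → i ≤ p → Even i → 2 * s i = (i - 1) * ((d - 1) * l + 2) + l

/-- A `C`-datum: subsets `X i ⊆ [1, l-1]` for `2 ≤ i ≤ p` (empty outside this range)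
together with disjoint subsets `R, B ⊆ [1, n]`. -/
structure CDatum (S : NakSetup) where
  X : ℤ → Finset ℤ
  R : Finset ℤ
  B : Finset ℤ
  hX : ∀ i, X i ⊆ Finset.Icc 1 (S.l - 1)
  hXout : ∀ i, ¬(2 ≤ i ∧ i ≤ S.p) → X i = ∅
  hR : R ⊆ Finset.Icc 1 S.n
  hB : B ⊆ Finset.Icc 1 S.n
  hRB : Disjoint R B

namespace CDatum

variable {S : NakSetup}

/-- `m i = |X i|` (as an integer). -/
noncomputable def m (D : CDatum S) (i : ℤ) : ℤ := (D.X i).card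

/-- `l_i`: the minimum of `X i`, or `l` if `X i = ∅`. -/
noncomputable def lo (D : CDatum S) (i : ℤ) : ℤ :=
  if h : (D.X i).Nonempty then (D.X i).min' h else S.l

/-- `n_i`: the maximum of `X i`, or `0` if `X i = ∅`. -/
noncomputable def hi (D : CDatum S) (i : ℤ) : ℤ :=
  if h : (D.X i).Nonempty then (D.X i).max' h else 0

/-- The interval `𝖡_i`. -/
noncomputable def BI (D : CDatum S) (i : ℤ) : Finset ℤ :=
  if Odd i then Finset.Icc (S.s i) (S.s i + D.hi i - 1)
  else Finset.Icc (S.s i - D.hi i + 1) (S.s i)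

/-- The interval `𝖱_i`. -/
noncomputable def RI (D : CDatum S) (i : ℤ) : Finset ℤ :=
  if Odd i then Finset.Icc (S.s (i - 1) - (S.l - D.lo i) + 1) (S.s (i - 1))
  else Finset.Icc (S.s (i - 1)) (S.s (i - 1) + (S.l - D.lo i) - 1)

/-- A `C`-datum is rigid (the combinatorial form of being a `τ_d`-rigid pair). -/
def Rigid (D : CDatum S) : Prop :=
  (∀ x ∈ D.B, ∀ y ∈ D.R, x < y →
      ∃ z, x < z ∧ z + S.l - 2 < y ∧ Finset.Icc z (z + S.l - 2) ∩ (D.R ∪ D.B) = ∅) ∧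
  (∀ i, 2 ≤ i → i ≤ S.p → Odd i →
      D.hi (i - 1) + D.hi i ≤ S.l - 1 ∧ S.l + 1 ≤ D.lo i + D.lo (i + 1) ∧
      (S.d = 2 → D.hi i ≤ D.lo (i + 2) + 1 ∧ D.hi (i - 2) ≤ D.lo i + 1)) ∧
  (∀ i, 2 ≤ i → i ≤ S.p → Even i →
      D.hi i + D.hi (i + 1) ≤ S.l - 1 ∧ S.l + 1 ≤ D.lo (i - 1) + D.lo i) ∧
  (∀ i, 2 ≤ i → i ≤ S.p → D.R ∩ D.RI i = ∅ ∧ D.B ∩ D.BI i = ∅)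

/-- The left endpoint of `Ξ(i, i+k)` (the left endpoint of `𝖱_i`). -/
noncomputable def xiLo (D : CDatum S) (i : ℤ) : ℤ :=
  if Odd i then S.s (i - 1) - (S.l - D.lo i) + 1 else S.s (i - 1)

/-- The right endpoint of `Ξ(i, i+k)`, depending on `j = i + k`
(the right endpoint of `𝖡_{i+k}`). -/
noncomputable def xiHi (D : CDatum S) (j : ℤ) : ℤ :=
  if Even j then S.s j else S.s j + D.hi j - 1

/-- The interval `Ξ(i, i+k)`. -/
noncomputable def Xi (D : CDatum S) (i k : ℤ) : Finset ℤ :=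
  Finset.Icc (D.xiLo i) (D.xiHi (i + k))

/-- The union `𝖡_2 ∪ … ∪ 𝖡_p`. -/
noncomputable def BigB (D : CDatum S) : Finset ℤ :=
  (Finset.Icc 2 S.p).biUnion fun i => D.BI i

/-- The union `𝖱_2 ∪ … ∪ 𝖱_p`. -/
noncomputable def BigR (D : CDatum S) : Finset ℤ :=
  (Finset.Icc 2 S.p).biUnion fun i => D.RI i

/-- The interval `I` is support. -/
def IsSupport (D : CDatum S) (I : Finset ℤ) : Prop :=
  D.R ∩ I = ∅ ∧ D.B ∩ I = I \ D.BigB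

/-- The interval `I` is rigid. -/
def IsRigidI (D : CDatum S) (I : Finset ℤ) : Prop :=
  D.B ∩ I = ∅ ∧ D.R ∩ I = I \ D.BigR

/-- The interval `I` is support to rigid at `x ∈ I`. -/
def IsSuppToRigid (D : CDatum S) (I : Finset ℤ) (x : ℤ) : Prop :=
  x ∈ I ∧ D.B ∩ I = {y ∈ I | y ≤ x} ∧ (D.B ∩ I).Nonempty ∧
    D.R ∩ I = {y ∈ I | x + S.l ≤ y} ∧ (D.R ∩ I).Nonempty

/-- The interval `I` is rigid to support at `x ∈ I`. -/
def IsRigidToSupp (D : CDatum S) (I : Finset ℤ) (x : ℤ) : Prop :=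
  x ∈ I ∧ D.R ∩ I = {y ∈ I | y ≤ x} ∧ (D.R ∩ I).Nonempty ∧
    D.B ∩ I = {y ∈ I | x + 1 ≤ y} ∧ (D.B ∩ I).Nonempty

/-- `(X_i, …, X_{i+k})` is an admissible configuration (types (I)–(VIII)). -/
def Admissible (D : CDatum S) (i k : ℤ) : Prop :=
  2 ≤ i ∧ i + k ≤ S.p ∧ 0 ≤ k ∧
  (∀ j, 0 ≤ j → j ≤ k → (D.X (i + j)).Nonempty) ∧
  ((k = 0 ∧ D.lo i = 1 ∧ D.hi i < S.l - 1 ∧ D.IsSupport (D.Xi i k)) ∨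
   (k = 0 ∧ 1 < D.lo i ∧ D.hi i = S.l - 1 ∧ D.IsRigidI (D.Xi i k)) ∨
   (k = 0 ∧ D.lo i = 1 ∧ D.hi i = S.l - 1 ∧
     (D.IsSupport (D.Xi i k) ∨ D.IsRigidI (D.Xi i k) ∨
       ∃ x ∈ D.Xi i k \ D.BI i, D.IsSuppToRigid (D.Xi i k) x)) ∨
   (k = 1 ∧ Odd i ∧ D.hi i = S.l - 1 ∧ D.hi (i + 1) = S.l - 1 ∧
     D.m i + D.m (i + 1) < S.l - 1 ∧ D.IsRigidI (D.Xi i k)) ∨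
   (k = 1 ∧ Even i ∧ D.lo i = 1 ∧ D.lo (i + 1) = 1 ∧
     D.m i + D.m (i + 1) < S.l - 1 ∧ D.IsSupport (D.Xi i k)) ∨
   (k = 1 ∧ Odd i ∧ D.hi i = S.l - 1 ∧ D.hi (i + 1) = S.l - 1 ∧
     D.m i + D.m (i + 1) = S.l - 1 ∧
     (D.IsRigidI (D.Xi i k) ∨
       ∃ x ∈ Finset.Icc (S.s i - (S.l - D.m (i + 1))) (S.s i - 1),
         D.IsSuppToRigid (D.Xi i k) x)) ∨
   (k = 1 ∧ Even i ∧ D.lo i = 1 ∧ D.lo (i + 1) = 1 ∧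
     D.m i + D.m (i + 1) = S.l - 1 ∧
     (D.IsSupport (D.Xi i k) ∨
       ∃ x ∈ Finset.Icc (S.s i - (S.l - 1)) (S.s i - D.m i),
         D.IsSuppToRigid (D.Xi i k) x)) ∨
   (k = 2 ∧ S.d = 2 ∧ Even i ∧ D.lo i = 1 ∧ D.lo (i + 1) = S.l - D.lo (i + 2) + 1 ∧
     D.hi (i + 1) = S.l - D.hi i - 1 ∧ D.hi (i + 2) = S.l - 1 ∧
     ∃ x ∈ Finset.Icc (S.s (i + 1) - D.lo (i + 2)) (S.s i - D.hi i),
       D.IsSuppToRigid (D.Xi i k) x))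

/-- The configuration on `[i, i+k]` is full: `m_{i+j} = n_{i+j} - l_{i+j} + 1`. -/
def Full (D : CDatum S) (i k : ℤ) : Prop :=
  ∀ j, 0 ≤ j → j ≤ k → D.m (i + j) = D.hi (i + j) - D.lo (i + j) + 1

/-- `[a, b]` is a maximal run of indices with `X` nonempty
(an interval of the diagonal partition). -/
def IsBlock (D : CDatum S) (a b : ℤ) : Prop :=
  2 ≤ a ∧ b ≤ S.p ∧ a ≤ b ∧ (∀ j, a ≤ j → j ≤ b → (D.X j).Nonempty) ∧
    D.X (a - 1) = ∅ ∧ D.X (b + 1) = ∅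

/-- `[a, b]` is the first interval of the diagonal partition. -/
def FirstBlock (D : CDatum S) (a b : ℤ) : Prop :=
  D.IsBlock a b ∧ ∀ j, j < a → D.X j = ∅

/-- `[a, b]` is the last interval of the diagonal partition. -/
def LastBlock (D : CDatum S) (a b : ℤ) : Prop :=
  D.IsBlock a b ∧ ∀ j, b < j → D.X j = ∅

/-- `[a, b]` and `[a', b']` are consecutive intervals of the diagonal partition. -/
def ConsecBlocks (D : CDatum S) (a b a' b' : ℤ) : Prop :=
  D.IsBlock a b ∧ D.IsBlock a' b' ∧ b < a' ∧ ∀ j, b < j → j < a' → D.X j = ∅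

/-- The diagonal component `T = {i ∈ [2, p] : X i ≠ ∅}`. -/
noncomputable def T (D : CDatum S) : Finset ℤ :=
  {i ∈ Finset.Icc 2 S.p | (D.X i).Nonempty}

/-- The configuration on the block `[a, b]` is full admissible of type (III). -/
def FullType3 (D : CDatum S) (a b : ℤ) : Prop :=
  a = b ∧ D.lo a = 1 ∧ D.hi a = S.l - 1 ∧ D.m a = S.l - 1 ∧
    (D.IsSupport (D.Xi a 0) ∨ D.IsRigidI (D.Xi a 0) ∨
      ∃ x ∈ D.Xi a 0 \ D.BI a, D.IsSuppToRigid (D.Xi a 0) x)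

/-- A `Θ`-interval is rigid, support, or rigid to support. -/
def GoodTheta (D : CDatum S) (I : Finset ℤ) : Prop :=
  D.IsRigidI I ∨ D.IsSupport I ∨ ∃ x, D.IsRigidToSupp I x

/-- A `C`-datum is well-configured. -/
def WellConfigured (D : CDatum S) : Prop :=
  (D.T = ∅ ∧ ∃ x, 0 ≤ x ∧ x ≤ S.n ∧ D.R = Finset.Icc 1 x ∧ D.B = Finset.Icc (x + 1) S.n) ∨
  (D.T.Nonempty ∧
    (∀ a b, D.IsBlock a b → D.Admissible a (b - a) ∧ D.Full a (b - a)) ∧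
    (∀ a b a' b', D.ConsecBlocks a b a' b' →
      D.Xi a (b - a) ∩ D.Xi a' (b' - a') = ∅) ∧
    (∀ a b, D.FirstBlock a b → D.GoodTheta (Finset.Icc 1 (D.xiLo a - 1))) ∧
    (∀ a b a' b', D.ConsecBlocks a b a' b' →
      D.GoodTheta (Finset.Icc (D.xiHi b + 1) (D.xiLo a' - 1))) ∧
    (∀ a b, D.LastBlock a b → D.GoodTheta (Finset.Icc (D.xiHi b + 1) S.n)) ∧
    (∀ a b, D.FirstBlock a b → D.IsRigidI (D.Xi a (b - a)) →
      D.IsRigidI (Finset.Icc 1 (D.xiLo a - 1)) ∨ D.FullType3 a b) ∧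
    (∀ a b a' b', D.ConsecBlocks a b a' b' → D.IsRigidI (D.Xi a' (b' - a')) →
      D.IsRigidI (Finset.Icc (D.xiHi b + 1) (D.xiLo a' - 1)) ∨ D.FullType3 a' b') ∧
    (∀ a b a' b', D.ConsecBlocks a b a' b' → D.IsSupport (D.Xi a (b - a)) →
      D.IsSupport (Finset.Icc (D.xiHi b + 1) (D.xiLo a' - 1)) ∨ D.FullType3 a b) ∧
    (∀ a b, D.LastBlock a b → D.IsSupport (D.Xi a (b - a)) →
      D.IsSupport (Finset.Icc (D.xiHi b + 1) S.n) ∨ D.FullType3 a b))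

/-- The summand count `|R| + |B| + Σ_{i=2}^p m_i`. -/
noncomputable def count (D : CDatum S) : ℤ :=
  (D.R.card : ℤ) + (D.B.card : ℤ) + ∑ i ∈ Finset.Icc 2 S.p, D.m i

end CDatum

open Finset

theorem Int.eq_Icc_min'_max'_iff_card {s : Finset ℤ} (hs : s.Nonempty) :
    s = Icc (s.min' hs) (s.max' hs) ↔ (#s : ℤ) = s.max' hs - s.min' hs + 1 := by
  have hle : s.min' hs ≤ s.max' hs := s.min'_le_max' hs
  constructor
  · intro h
    rw [congrArg Finset.card h]
    simp only [Int.card_Icc]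
    omega
  · intro h
    refine eq_of_subset_of_card_le (fun y hy => mem_Icc.2 ⟨s.min'_le y hy, s.le_max' y hy⟩) ?_
    simp only [Int.card_Icc]
    omega

noncomputable def wellConfiguredTriples (n l : ℤ) : Finset (Finset ℤ × Finset ℤ × Finset ℤ) :=
  (Icc 0 n).image (fun x => (∅, Icc 1 x, Icc (x + 1) n)) ∪
  (Icc 1 (l - 2)).image (fun b => (Icc 1 b, ∅, Icc 1 (n - b))) ∪
  (Icc 2 (l - 1)).image (fun a => (Icc a (l - 1), Icc (l - a + 1) n, ∅)) ∪
  (Icc 0 (n - l + 1)).image (fun x => (Icc 1 (l - 1), Icc (x + l) n, Icc 1 x))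

theorem mem_wellConfiguredTriples {n l : ℤ} {X R B : Finset ℤ} :
    (X, R, B) ∈ wellConfiguredTriples n l ↔
      (X = ∅ ∧ ∃ x, 0 ≤ x ∧ x ≤ n ∧ R = Icc 1 x ∧ B = Icc (x + 1) n) ∨
      (∃ b, 1 ≤ b ∧ b ≤ l - 2 ∧ X = Icc 1 b ∧ R = ∅ ∧ B = Icc 1 (n - b)) ∨
      (∃ a, 2 ≤ a ∧ a ≤ l - 1 ∧ X = Icc a (l - 1) ∧ R = Icc (l - a + 1) n ∧ B = ∅) ∨
      (X = Icc 1 (l - 1) ∧ ∃ x, 0 ≤ x ∧ x ≤ n - l + 1 ∧ R = Icc (x + l) n ∧ B = Icc 1 x) := by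
  simp only [wellConfiguredTriples, mem_union, mem_image, mem_Icc, Prod.mk.injEq, or_assoc]
  refine or_congr ?_ (or_congr ?_ (or_congr ?_ ?_)) <;> aesop

theorem card_wellConfiguredTriples {n l : ℤ} (hl : 2 ≤ l) (hln : l ≤ n + 2) :
    (#(wellConfiguredTriples n l) : ℤ) = 2 * n + l - 1 := by
  -- The four families are told apart by which of `1` and `l - 1` lie in the first component.
  have disj {A B : Finset (Finset ℤ × Finset ℤ × Finset ℤ)} (P : Finset ℤ → Prop)
      (hA : ∀ t ∈ A, ¬P t.1) (hB : ∀ t ∈ B, P t.1) : Disjoint A B :=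
    disjoint_left.2 fun t ha hb => hA t ha (hB t hb)
  have injOn {s : Finset ℤ} {f : ℤ → Finset ℤ × Finset ℤ × Finset ℤ}
      (g : Finset ℤ × Finset ℤ × Finset ℤ → Finset ℤ)
      (h : ∀ x ∈ s, ∀ y ∈ s, #(g (f x)) = #(g (f y)) → x = y) : Set.InjOn f s :=
    fun x hx y hy hxy => h x hx y hy (congrArg (card ∘ g) hxy)
  rw [wellConfiguredTriples, card_union_of_disjoint, card_union_of_disjoint,
    card_union_of_disjoint, card_image_of_injOn, card_image_of_injOn, card_image_of_injOn,
    card_image_of_injOn]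
  · simp only [Int.card_Icc]
    omega
  · refine injOn (fun t => t.2.2) fun x hx y hy h => ?_
    simp only [mem_Icc, Int.card_Icc] at hx hy h
    omega
  · refine injOn (fun t => t.1) fun x hx y hy h => ?_
    simp only [mem_Icc, Int.card_Icc] at hx hy h
    omega
  · refine injOn (fun t => t.1) fun x hx y hy h => ?_
    simp only [mem_Icc, Int.card_Icc] at hx hy h
    omega
  · refine injOn (fun t => t.2.1) fun x hx y hy h => ?_
    simp only [mem_Icc, Int.card_Icc] at hx hy h
    omega
  · exact disj (1 ∈ ·) (by simp only [forall_mem_image, mem_Icc]; grind)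
      (by simp only [forall_mem_image, mem_Icc]; grind)
  · exact disj (l - 1 ∈ ·) (by simp only [forall_mem_union, forall_mem_image, mem_Icc]; grind)
      (by simp only [forall_mem_image, mem_Icc]; grind)
  · exact disj (fun X => 1 ∈ X ∧ l - 1 ∈ X)
      (by simp only [forall_mem_union, forall_mem_image, mem_Icc]; grind)
      (by simp only [forall_mem_image, mem_Icc]; grind)

namespace NakSetup

variable (S : NakSetup)

theorem s_one : S.s 1 = 1 := by
  have := S.hs_odd 1 le_rfl S.hp odd_one
  linarith

theorem s_two (hp2 : S.p = 2) : S.s 2 = S.n := by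
  have h2 := S.hs_even 2 (by norm_num) hp2.ge even_two
  have hn := S.hn
  rw [hp2] at hn
  linarith

theorem l_lt_n (hp2 : S.p = 2) : S.l < S.n := by
  have hn := S.hn
  rw [hp2] at hn
  nlinarith [S.hd, S.hl]

end NakSetup

namespace CDatum

variable {S : NakSetup} (D : CDatum S)

theorem lo_eq_of_X_eq_Icc {i a b : ℤ} (hab : a ≤ b) (h : D.X i = Icc a b) : D.lo i = a := by
  have hne : (D.X i).Nonempty := h ▸ nonempty_Icc.2 hab
  rw [lo, dif_pos hne, min'_eq_iff, h]
  exact ⟨mem_Icc.2 ⟨le_rfl, hab⟩, fun y hy => (mem_Icc.1 hy).1⟩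

theorem hi_eq_of_X_eq_Icc {i a b : ℤ} (hab : a ≤ b) (h : D.X i = Icc a b) : D.hi i = b := by
  have hne : (D.X i).Nonempty := h ▸ nonempty_Icc.2 hab
  rw [hi, dif_pos hne, max'_eq_iff, h]
  exact ⟨mem_Icc.2 ⟨hab, le_rfl⟩, fun y hy => (mem_Icc.1 hy).2⟩

theorem lo_mem {i : ℤ} (hne : (D.X i).Nonempty) : D.lo i ∈ D.X i := by
  rw [lo, dif_pos hne]
  exact min'_mem _ hne

theorem hi_mem {i : ℤ} (hne : (D.X i).Nonempty) : D.hi i ∈ D.X i := by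
  rw [hi, dif_pos hne]
  exact max'_mem _ hne

theorem lo_le_hi {i : ℤ} (hne : (D.X i).Nonempty) : D.lo i ≤ D.hi i := by
  rw [lo, hi, dif_pos hne, dif_pos hne]
  exact min'_le_max' _ hne

theorem isRigidI_empty : D.IsRigidI ∅ := by
  simp [IsRigidI]

theorem isSupport_empty : D.IsSupport ∅ := by
  simp [IsSupport]

theorem full_iff {i : ℤ} (hne : (D.X i).Nonempty) :
    D.Full i 0 ↔ D.X i = Icc (D.lo i) (D.hi i) := by
  have hfull : D.Full i 0 ↔ D.m i = D.hi i - D.lo i + 1 :=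
    ⟨fun h => by simpa using h 0 le_rfl le_rfl,
      fun h j hj0 hj => by
        obtain rfl : j = 0 := by omega
        simpa using h⟩
  rw [hfull, m, lo, hi, dif_pos hne, dif_pos hne, Int.eq_Icc_min'_max'_iff_card]

theorem isSupport_Icc_iff :
    D.IsSupport (Icc 1 S.n) ↔ D.R = ∅ ∧ D.B = Icc 1 S.n \ D.BigB := by
  rw [IsSupport, inter_eq_left.2 D.hR, inter_eq_left.2 D.hB]

theorem isRigidI_Icc_iff :
    D.IsRigidI (Icc 1 S.n) ↔ D.B = ∅ ∧ D.R = Icc 1 S.n \ D.BigR := by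
  rw [IsRigidI, inter_eq_left.2 D.hR, inter_eq_left.2 D.hB]

theorem isSuppToRigid_Icc_iff (x : ℤ) :
    D.IsSuppToRigid (Icc 1 S.n) x ↔
      1 ≤ x ∧ x + S.l ≤ S.n ∧ D.B = Icc 1 x ∧ D.R = Icc (x + S.l) S.n := by
  have hl := S.hl
  rw [IsSuppToRigid, inter_eq_left.2 D.hR, inter_eq_left.2 D.hB]
  constructor
  · rintro ⟨hx, hB, -, hR, y, hy⟩
    rw [hR, mem_filter, mem_Icc] at hy
    rw [mem_Icc] at hx
    refine ⟨hx.1, by omega, hB.trans ?_, hR.trans ?_⟩ <;>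
      ext y <;> simp only [mem_filter, mem_Icc] <;> omega
  · rintro ⟨hx1, hxn, hB, hR⟩
    refine ⟨mem_Icc.2 ⟨hx1, by omega⟩, hB.trans ?_, hB ▸ nonempty_Icc.2 hx1, hR.trans ?_,
      hR ▸ nonempty_Icc.2 hxn⟩ <;>
      ext y <;> simp only [mem_filter, mem_Icc] <;> omega

theorem X_eq_empty_of_ne_two (hp2 : S.p = 2) {i : ℤ} (hi : i ≠ 2) : D.X i = ∅ :=
  D.hXout i (by omega)

theorem xiLo_two : D.xiLo 2 = 1 := by
  rw [xiLo, if_neg (Int.not_odd_iff_even.2 even_two)]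
  exact S.s_one

theorem xiHi_two (hp2 : S.p = 2) : D.xiHi 2 = S.n := by
  rw [xiHi, if_pos even_two, S.s_two hp2]

theorem xi_two_zero (hp2 : S.p = 2) : D.Xi 2 0 = Icc 1 S.n := by
  rw [Xi, add_zero, xiLo_two, xiHi_two D hp2]

theorem BI_two (hp2 : S.p = 2) : D.BI 2 = Icc (S.n - D.hi 2 + 1) S.n := by
  rw [BI, if_neg (Int.not_odd_iff_even.2 even_two), S.s_two hp2]

theorem bigB_eq (hp2 : S.p = 2) : D.BigB = Icc (S.n - D.hi 2 + 1) S.n := by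
  rw [BigB, hp2, Icc_self, singleton_biUnion, BI_two D hp2]

theorem bigR_eq (hp2 : S.p = 2) : D.BigR = Icc 1 (S.l - D.lo 2) := by
  rw [BigR, hp2, Icc_self, singleton_biUnion, RI, if_neg (Int.not_odd_iff_even.2 even_two),
    show (2 : ℤ) - 1 = 1 by norm_num, S.s_one, add_sub_cancel_left]

theorem T_eq_empty_iff (hp2 : S.p = 2) : D.T = ∅ ↔ D.X 2 = ∅ := by
  rw [T, hp2, Icc_self, filter_singleton]
  split_ifs with h
  · simp [nonempty_iff_ne_empty.1 h]
  · simpa [not_nonempty_iff_eq_empty] using h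

theorem T_nonempty_iff (hp2 : S.p = 2) : D.T.Nonempty ↔ (D.X 2).Nonempty := by
  rw [nonempty_iff_ne_empty, nonempty_iff_ne_empty, Ne, Ne, T_eq_empty_iff D hp2]

theorem isBlock_iff (hp2 : S.p = 2) {a b : ℤ} :
    D.IsBlock a b ↔ a = 2 ∧ b = 2 ∧ (D.X 2).Nonempty := by
  constructor
  · rintro ⟨ha, hb, hab, hne, -⟩
    obtain ⟨rfl, rfl⟩ : a = 2 ∧ b = 2 := by omega
    exact ⟨rfl, rfl, hne 2 le_rfl le_rfl⟩
  · rintro ⟨rfl, rfl, hne⟩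
    refine ⟨le_rfl, hp2.ge, le_rfl, fun j hj hj' => ?_, D.X_eq_empty_of_ne_two hp2 (by norm_num),
      D.X_eq_empty_of_ne_two hp2 (by norm_num)⟩
    obtain rfl : j = 2 := by omega
    exact hne

theorem not_consecBlocks (hp2 : S.p = 2) {a b a' b' : ℤ} : ¬D.ConsecBlocks a b a' b' := by
  rintro ⟨h, h', hlt, -⟩
  obtain ⟨rfl, rfl, -⟩ := (D.isBlock_iff hp2).1 h
  obtain ⟨rfl, -⟩ := (D.isBlock_iff hp2).1 h'
  exact lt_irrefl _ hlt

theorem wellConfigured_iff (hp2 : S.p = 2) : D.WellConfigured ↔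
    (D.X 2 = ∅ ∧ ∃ x, 0 ≤ x ∧ x ≤ S.n ∧ D.R = Icc 1 x ∧ D.B = Icc (x + 1) S.n) ∨
      ((D.X 2).Nonempty ∧ D.Admissible 2 0 ∧ D.Full 2 0) := by
  have hΘ₀ : Icc 1 (D.xiLo 2 - 1) = ∅ := by simp [xiLo_two]
  have hΘ₁ : Icc (D.xiHi 2 + 1) S.n = ∅ := by simp [xiHi_two D hp2]
  rw [WellConfigured, T_eq_empty_iff D hp2, T_nonempty_iff D hp2]
  constructor
  · rintro (h | ⟨hne, hblocks, -⟩)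
    · exact Or.inl h
    · exact Or.inr ⟨hne, by simpa using hblocks 2 2 ((D.isBlock_iff hp2).2 ⟨rfl, rfl, hne⟩)⟩
  · rintro (h | ⟨hne, hadm, hfull⟩)
    · exact Or.inl h
    refine Or.inr ⟨hne, fun a b h => ?_, fun _ _ _ _ h => (D.not_consecBlocks hp2 h).elim,
      fun a b h => ?_, fun _ _ _ _ h => (D.not_consecBlocks hp2 h).elim, fun a b h => ?_,
      fun a b h _ => ?_, fun _ _ _ _ h => (D.not_consecBlocks hp2 h).elim,
      fun _ _ _ _ h => (D.not_consecBlocks hp2 h).elim, fun a b h _ => ?_⟩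
    · obtain ⟨rfl, rfl, -⟩ := (D.isBlock_iff hp2).1 h
      exact ⟨hadm, hfull⟩
    · obtain ⟨rfl, -⟩ := (D.isBlock_iff hp2).1 h.1
      exact Or.inl (hΘ₀ ▸ D.isRigidI_empty)
    · obtain ⟨-, rfl, -⟩ := (D.isBlock_iff hp2).1 h.1
      exact Or.inl (hΘ₁ ▸ D.isRigidI_empty)
    · obtain ⟨rfl, -⟩ := (D.isBlock_iff hp2).1 h.1
      exact Or.inl (hΘ₀ ▸ D.isRigidI_empty)
    · obtain ⟨-, rfl, -⟩ := (D.isBlock_iff hp2).1 h.1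
      exact Or.inl (hΘ₁ ▸ D.isSupport_empty)

theorem typeIII_iff (hp2 : S.p = 2) (hlo : D.lo 2 = 1) (hhi : D.hi 2 = S.l - 1) :
    (D.IsSupport (Icc 1 S.n) ∨ D.IsRigidI (Icc 1 S.n) ∨
        ∃ x ∈ Icc 1 S.n \ D.BI 2, D.IsSuppToRigid (Icc 1 S.n) x) ↔
      ∃ x, 0 ≤ x ∧ x ≤ S.n - S.l + 1 ∧ D.R = Icc (x + S.l) S.n ∧ D.B = Icc 1 x := by
  have hl := S.hl
  have hln := S.l_lt_n hp2
  rw [isSupport_Icc_iff, isRigidI_Icc_iff, bigB_eq D hp2, bigR_eq D hp2, BI_two D hp2, hlo, hhi]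
  constructor
  · rintro (⟨hR, hB⟩ | ⟨hB, hR⟩ | ⟨x, hx, hsr⟩)
    · refine ⟨S.n - S.l + 1, by omega, le_rfl, hR.trans (Icc_eq_empty (by omega)).symm,
        hB.trans ?_⟩
      ext y; simp only [mem_sdiff, mem_Icc]; omega
    · refine ⟨0, le_rfl, by omega, hR.trans ?_, hB.trans (Icc_eq_empty (by omega)).symm⟩
      ext y; simp only [mem_sdiff, mem_Icc]; omega
    · obtain ⟨hx1, hxn, hB, hR⟩ := (D.isSuppToRigid_Icc_iff x).1 hsr
      exact ⟨x, by omega, by omega, hR, hB⟩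
  · rintro ⟨x, hx0, hxn, hR, hB⟩
    rcases hx0.eq_or_lt with rfl | hx0
    · refine Or.inr (Or.inl ⟨hB.trans (Icc_eq_empty (by omega)), hR.trans ?_⟩)
      ext y; simp only [mem_sdiff, mem_Icc]; omega
    rcases hxn.eq_or_lt with rfl | hxn
    · refine Or.inl ⟨hR.trans (Icc_eq_empty (by omega)), hB.trans ?_⟩
      ext y; simp only [mem_sdiff, mem_Icc]; omega
    · refine Or.inr (Or.inr ⟨x, ?_, (D.isSuppToRigid_Icc_iff x).2 ⟨hx0, by omega, hB, hR⟩⟩)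
      simp only [mem_sdiff, mem_Icc]; omega

theorem admissible_two_zero_iff (hp2 : S.p = 2) {a b : ℤ} (ha : 1 ≤ a) (hab : a ≤ b)
    (hb : b ≤ S.l - 1) (hX : D.X 2 = Icc a b) : D.Admissible 2 0 ↔
      (a = 1 ∧ b < S.l - 1 ∧ D.R = ∅ ∧ D.B = Icc 1 (S.n - b)) ∨
      (1 < a ∧ b = S.l - 1 ∧ D.R = Icc (S.l - a + 1) S.n ∧ D.B = ∅) ∨
      (a = 1 ∧ b = S.l - 1 ∧
        ∃ x, 0 ≤ x ∧ x ≤ S.n - S.l + 1 ∧ D.R = Icc (x + S.l) S.n ∧ D.B = Icc 1 x) := by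
  have hlo := D.lo_eq_of_X_eq_Icc hab hX
  have hhi := D.hi_eq_of_X_eq_Icc hab hX
  have hX_ne : ∀ j, 0 ≤ j → j ≤ 0 → (D.X (2 + j)).Nonempty := fun j hj hj' => by
    obtain rfl : j = 0 := by omega
    exact hX ▸ nonempty_Icc.2 hab
  have hB : Icc 1 S.n \ Icc (S.n - b + 1) S.n = Icc 1 (S.n - b) := by
    ext y; simp only [mem_sdiff, mem_Icc]; omega
  have hR : Icc 1 S.n \ Icc 1 (S.l - a) = Icc (S.l - a + 1) S.n := by
    ext y; simp only [mem_sdiff, mem_Icc]; omega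
  rw [Admissible, and_iff_right le_rfl, and_iff_right (by omega), and_iff_right le_rfl,
    and_iff_right hX_ne]
  simp only [zero_ne_one, OfNat.zero_ne_ofNat, false_and, or_false, true_and, xi_two_zero D hp2]
  constructor
  · rintro (⟨h1, h2, hs⟩ | ⟨h1, h2, hr⟩ | ⟨h1, h2, h3⟩)
    · rw [isSupport_Icc_iff, bigB_eq D hp2, hhi, hB] at hs
      exact Or.inl ⟨hlo ▸ h1, hhi ▸ h2, hs⟩
    · rw [isRigidI_Icc_iff, bigR_eq D hp2, hlo, hR] at hr
      exact Or.inr (Or.inl ⟨hlo ▸ h1, hhi ▸ h2, hr.2, hr.1⟩)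
    · exact Or.inr (Or.inr ⟨hlo ▸ h1, hhi ▸ h2, (D.typeIII_iff hp2 h1 h2).1 h3⟩)
  · rintro (⟨rfl, h2, hs⟩ | ⟨h1, rfl, hr⟩ | ⟨rfl, rfl, h3⟩)
    · rw [isSupport_Icc_iff, bigB_eq D hp2, hhi, hB]
      exact Or.inl ⟨hlo, hhi ▸ h2, hs⟩
    · rw [isRigidI_Icc_iff, bigR_eq D hp2, hlo, hR]
      exact Or.inr (Or.inl ⟨hlo ▸ h1, hhi, hr.2, hr.1⟩)
    · exact Or.inr (Or.inr ⟨hlo, hhi, (D.typeIII_iff hp2 hlo hhi).2 h3⟩)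

def toTriple : Finset ℤ × Finset ℤ × Finset ℤ := (D.X 2, D.R, D.B)

theorem toTriple_injective (hp2 : S.p = 2) : Function.Injective (toTriple (S := S)) := by
  intro D E h
  simp only [toTriple, Prod.mk.injEq] at h
  obtain ⟨hX, hR, hB⟩ := h
  have : D.X = E.X := funext fun i => by
    by_cases hi : i = 2
    · rw [hi, hX]
    · rw [D.X_eq_empty_of_ne_two hp2 hi, E.X_eq_empty_of_ne_two hp2 hi]
  cases D; cases E
  congr

def ofDiagTwo (hp : 2 ≤ S.p) (X R B : Finset ℤ) (hX : X ⊆ Icc 1 (S.l - 1))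
    (hR : R ⊆ Icc 1 S.n) (hB : B ⊆ Icc 1 S.n) (hRB : Disjoint R B) : CDatum S where
  X i := if i = 2 then X else ∅
  R := R
  B := B
  hX i := by
    split_ifs
    exacts [hX, empty_subset _]
  hXout i hi := if_neg (by rintro rfl; exact hi ⟨le_rfl, hp⟩)
  hR := hR
  hB := hB
  hRB := hRB

theorem exists_toTriple_eq (hp2 : S.p = 2) {t : Finset ℤ × Finset ℤ × Finset ℤ}
    (ht : t ∈ wellConfiguredTriples S.n S.l) : ∃ D : CDatum S, D.toTriple = t := by
  have hl := S.hl
  obtain ⟨X, R, B⟩ := t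
  suffices X ⊆ Icc 1 (S.l - 1) ∧ R ⊆ Icc 1 S.n ∧ B ⊆ Icc 1 S.n ∧ Disjoint R B from
    ⟨ofDiagTwo hp2.ge X R B this.1 this.2.1 this.2.2.1 this.2.2.2, by simp [toTriple, ofDiagTwo]⟩
  rcases mem_wellConfiguredTriples.1 ht with
    ⟨rfl, x, hx, hx', rfl, rfl⟩ | ⟨b, hb, hb', rfl, rfl, rfl⟩ | ⟨a, ha, ha', rfl, rfl, rfl⟩ |
      ⟨rfl, x, hx, hx', rfl, rfl⟩ <;>
    refine ⟨fun y => ?_, fun y => ?_, fun y => ?_, disjoint_left.2 fun y => ?_⟩ <;>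
    simp only [mem_Icc, notMem_empty, false_imp_iff, not_false_eq_true, imp_true_iff,
      and_imp] <;> omega

theorem wellConfigured_iff_of_X_eq_Icc (hp2 : S.p = 2) {a b : ℤ} (ha : 1 ≤ a)
    (hab : a ≤ b) (hb : b ≤ S.l - 1) (hX : D.X 2 = Icc a b) : D.WellConfigured ↔
      (a = 1 ∧ b < S.l - 1 ∧ D.R = ∅ ∧ D.B = Icc 1 (S.n - b)) ∨
      (1 < a ∧ b = S.l - 1 ∧ D.R = Icc (S.l - a + 1) S.n ∧ D.B = ∅) ∨
      (a = 1 ∧ b = S.l - 1 ∧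
        ∃ x, 0 ≤ x ∧ x ≤ S.n - S.l + 1 ∧ D.R = Icc (x + S.l) S.n ∧ D.B = Icc 1 x) := by
  have hne : (D.X 2).Nonempty := hX ▸ nonempty_Icc.2 hab
  have hfull : D.Full 2 0 := by
    rw [D.full_iff hne, D.lo_eq_of_X_eq_Icc hab hX, D.hi_eq_of_X_eq_Icc hab hX, hX]
  rw [D.wellConfigured_iff hp2, ← D.admissible_two_zero_iff hp2 ha hab hb hX]
  simp [hne, hne.ne_empty, hfull]

variable {D}

theorem toTriple_mem_of_wellConfigured (hp2 : S.p = 2)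
    (h : D.WellConfigured) : D.toTriple ∈ wellConfiguredTriples S.n S.l := by
  rw [toTriple, mem_wellConfiguredTriples]
  rcases (D.wellConfigured_iff hp2).1 h with h' | ⟨hne, -, hfull⟩
  · exact Or.inl h'
  have hX := (D.full_iff hne).1 hfull
  have hlo := (mem_Icc.1 (D.hX 2 (D.lo_mem hne))).1
  have hhi := (mem_Icc.1 (D.hX 2 (D.hi_mem hne))).2
  have hle := D.lo_le_hi hne
  rcases (D.wellConfigured_iff_of_X_eq_Icc hp2 hlo hle hhi hX).1 h with
    ⟨h1, h2, hR, hB⟩ | ⟨h1, h2, hR, hB⟩ | ⟨h1, h2, hRB⟩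
  · exact Or.inr (Or.inl ⟨D.hi 2, by omega, by omega, h1 ▸ hX, hR, hB⟩)
  · exact Or.inr (Or.inr (Or.inl ⟨D.lo 2, by omega, by omega, h2 ▸ hX, hR, hB⟩))
  · exact Or.inr (Or.inr (Or.inr ⟨by rw [hX, h1, h2], hRB⟩))

theorem wellConfigured_of_toTriple_mem (hp2 : S.p = 2)
    (h : D.toTriple ∈ wellConfiguredTriples S.n S.l) : D.WellConfigured := by
  have hl := S.hl
  rcases mem_wellConfiguredTriples.1 h with
    h | ⟨b, hb, hb', hX, hR, hB⟩ | ⟨a, ha, ha', hX, hR, hB⟩ | ⟨hX, hRB⟩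
  · exact (D.wellConfigured_iff hp2).2 (Or.inl h)
  · exact (D.wellConfigured_iff_of_X_eq_Icc hp2 le_rfl hb (by omega) hX).2
      (Or.inl ⟨rfl, by omega, hR, hB⟩)
  · exact (D.wellConfigured_iff_of_X_eq_Icc hp2 (by omega) ha' le_rfl hX).2
      (Or.inr (Or.inl ⟨by omega, rfl, hR, hB⟩))
  · exact (D.wellConfigured_iff_of_X_eq_Icc hp2 le_rfl (by omega) le_rfl hX).2
      (Or.inr (Or.inr ⟨rfl, rfl, hRB⟩))

end CDatum

/-- if `p = 2` then there are exactly `2n + l - 1` well-configured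
`C`-data. -/
theorem stmt16 (S : NakSetup) (hp2 : S.p = 2) :
    (Nat.card {D : CDatum S // D.WellConfigured} : ℤ) = 2 * S.n + S.l - 1 := by
  have hbij : Function.Bijective fun D : {D : CDatum S // D.WellConfigured} =>
      (⟨D.1.toTriple, CDatum.toTriple_mem_of_wellConfigured hp2 D.2⟩ :
        wellConfiguredTriples S.n S.l) := by
    refine ⟨fun D E h => Subtype.ext (CDatum.toTriple_injective hp2 (congrArg Subtype.val h)),
      fun ⟨t, ht⟩ => ?_⟩
    obtain ⟨D, rfl⟩ := CDatum.exists_toTriple_eq hp2 ht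
    exact ⟨⟨D, CDatum.wellConfigured_of_toTriple_mem hp2 ht⟩, rfl⟩
  rw [Nat.card_eq_of_bijective _ hbij, Nat.card_eq_finsetCard,
    card_wellConfiguredTriples S.hl (by linarith [S.l_lt_n hp2])]
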